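/- Let A ⊕ B be a closed densely defined operator in H ⊕ K such that for each 1 ≤ m ≤ k the powers A^m, B^m are closable and the closure of A^m ⊕ B^m is C-selfadjoint (all with respect to the same conjugation C on H ⊕ K). Let F be a linearly dense subspace of H with F ⊆ ⋃_{1≤m≤k} (ker Ā^m ∩ ker (A^{k+1−m})*), and assume ⋃_{1≤m≤k} (ker (B^m)* ∩ ker \overline{B^{k+1−m}}) = {0}. Then the subspaces H and K reduce C (C H = H, C K = K), and A and B are each complex selfadjoint. -/

import Mathlib

open InnerProductSpace in
/-- A conjugation on a complex inner product space: an antilinear involution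
satisfying `⟪Cf, Cg⟫ = ⟪g, f⟫`. -/
structure Conjugation (H : Type*) [NormedAddCommGroup H] [InnerProductSpace ℂ H] where
  toFun : H → H
  map_add' : ∀ x y, toFun (x + y) = toFun x + toFun y
  map_smul' : ∀ (c : ℂ) (x : H), toFun (c • x) = (starRingEnd ℂ c) • toFun x
  invol : ∀ x, toFun (toFun x) = x
  inner_map : ∀ x y, (inner ℂ (toFun x) (toFun y) : ℂ) = inner ℂ y x

/-- `T` is `C`-symmetric: `T ⊆ C T* C`. -/
noncomputable def CSymmetric {H : Type*} [NormedAddCommGroup H] [InnerProductSpace ℂ H]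
    [CompleteSpace H] (C : Conjugation H) (T : H →ₗ.[ℂ] H) : Prop :=
  ∀ x : T.domain, ∃ hx : C.toFun x ∈ T.adjoint.domain,
    C.toFun (T.adjoint ⟨C.toFun x, hx⟩) = T x

/-- `T` is `C`-selfadjoint: `T = C T* C`. -/
noncomputable def CSelfAdjoint {H : Type*} [NormedAddCommGroup H] [InnerProductSpace ℂ H]
    [CompleteSpace H] (C : Conjugation H) (T : H →ₗ.[ℂ] H) : Prop :=
  CSymmetric C T ∧ ∀ y : H, C.toFun y ∈ T.adjoint.domain → y ∈ T.domain

/-- Composition of partially defined linear maps, with its natural (maximal) domain. -/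
noncomputable def LinearPMap.pcomp {R E F G : Type*} [Ring R] [AddCommGroup E] [Module R E]
    [AddCommGroup F] [Module R F] [AddCommGroup G] [Module R G]
    (g : F →ₗ.[R] G) (f : E →ₗ.[R] F) : E →ₗ.[R] G :=
  g.comp (f.domRestrict ((g.domain.comap f.toFun).map f.domain.subtype))
    (by
      rintro ⟨x, hx1, hx2⟩
      obtain ⟨y, hy, hyx⟩ := hx1
      erw [LinearPMap.domRestrict_apply (y := y) (by exact hyx.symm)]
      exact hy)

/-- Natural powers of a partially defined linear map, `T^(n+1) = T ∘ T^n`, with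
`T^0` the identity on the whole space. -/
noncomputable def LinearPMap.ppow {R E : Type*} [Ring R] [AddCommGroup E] [Module R E]
    (T : E →ₗ.[R] E) : ℕ → E →ₗ.[R] E
  | 0 => ⟨⊤, (⊤ : Submodule R E).subtype⟩
  | n + 1 => T.pcomp (T.ppow n)

/-- The kernel of a partially defined linear map, as a set. -/
def pker {R E F : Type*} [Ring R] [AddCommGroup E] [Module R E] [AddCommGroup F] [Module R F]
    (f : E →ₗ.[R] F) : Set E :=
  {x : E | ∃ hx : x ∈ f.domain, f ⟨x, hx⟩ = 0}

/-!
Everything is read off graphs. Up to reordering, the graph of a direct sum `A ⊕ B` is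
`graph A × graph B`, so kernels, closures and adjoints of direct sums are the direct sums of the
kernels, closures and adjoints; and `T` is `C`-selfadjoint iff `C × C` maps `graph T` onto
`graph T*`, in particular `C` maps `ker T` onto `ker T*`.

Let `x ∈ F`, say `x ∈ ker Ā^m ∩ ker (A^n)*` with `n = k + 1 - m`, and write `S_j = A^j ⊕ B^j`.
Then `(x, 0) ∈ ker S̄_m` gives `C(x, 0) ∈ ker S̄_m* = ker S_m*`, and `(x, 0) ∈ ker S_n* = ker S̄_n*`
gives `C(x, 0) ∈ ker S̄_n`. So the `K`-component of `C(x, 0)` lies in `ker (B^m)* ∩ ker B̄^n = {0}`.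
By density and continuity `C` maps `H` into `H`, hence, preserving orthogonality, `K = H^⊥` into
`K`. Thus `C` restricts to conjugations of `H` and of `K`, and the `C`-selfadjointness of
`T = S̄_1 = A ⊕ B` splits into that of `A` and of `B`.
-/

open WithLp

section Algebra

variable {R E F : Type*} [Ring R] [AddCommGroup E] [Module R E] [AddCommGroup F] [Module R F]

theorem mem_pker_iff_mem_graph {f : E →ₗ.[R] F} {x : E} : x ∈ pker f ↔ (x, 0) ∈ f.graph :=
  ⟨fun ⟨hx, h⟩ => (LinearPMap.image_iff hx).1 h.symm,
    fun h => ⟨LinearPMap.mem_domain_of_mem_graph h, ((LinearPMap.image_iff _).2 h).symm⟩⟩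

theorem zero_mem_pker (f : E →ₗ.[R] F) : (0 : E) ∈ pker f :=
  mem_pker_iff_mem_graph.2 f.graph.zero_mem

theorem LinearPMap.ppow_one (A : E →ₗ.[R] E) : A.ppow 1 = A := by
  refine LinearPMap.ext ?_ fun _ _ _ => congrArg A rfl
  ext x
  exact ⟨fun ⟨⟨y, hy, hyx⟩, _⟩ => hyx ▸ hy, fun h => ⟨⟨⟨x, trivial⟩, h, rfl⟩, trivial⟩⟩

end Algebra

namespace LinearPMap

section Topology

variable {R E F : Type*} [CommRing R] [AddCommGroup E] [AddCommGroup F] [Module R E] [Module R F]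
  [TopologicalSpace E] [TopologicalSpace F]

theorem closure_domain_subset [ContinuousAdd E] [ContinuousAdd F] [TopologicalSpace R]
    [ContinuousSMul R E] [ContinuousSMul R F] (f : E →ₗ.[R] F) :
    (f.closure.domain : Set E) ⊆ _root_.closure f.domain := by
  by_cases hf : f.IsClosable
  · intro x hx
    obtain ⟨y, hxy⟩ := mem_domain_iff.1 hx
    rw [← hf.graph_closure_eq_closure_graph, ← SetLike.mem_coe,
      Submodule.topologicalClosure_coe] at hxy
    exact map_mem_closure continuous_fst hxy fun p hp => mem_domain_of_mem_graph hp
  · rw [closure_def' hf]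
    exact subset_closure

theorem IsClosed.closure_eq [ContinuousAdd E] [ContinuousAdd F] [TopologicalSpace R]
    [ContinuousSMul R E] [ContinuousSMul R F] {f : E →ₗ.[R] F} (hf : f.IsClosed) :
    f.closure = f :=
  eq_of_eq_graph <| by
    rw [← hf.isClosable.graph_closure_eq_closure_graph, hf.submodule_topologicalClosure_eq]

end Topology

section Adjoint

variable {𝕜 E F : Type*} [RCLike 𝕜] [NormedAddCommGroup E] [InnerProductSpace 𝕜 E]
  [NormedAddCommGroup F] [InnerProductSpace 𝕜 F] [CompleteSpace E]

theorem adjoint_closure {T : E →ₗ.[𝕜] F} (hT : Dense (T.domain : Set E)) :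
    T.closure.adjoint = T.adjoint := by
  by_cases hc : T.IsClosable
  swap
  · rw [closure_def' hc]
  have hTc : Dense (T.closure.domain : Set E) := hT.mono T.le_closure.1
  refine eq_of_eq_graph (Submodule.ext fun y => ?_)
  have hclosed : _root_.IsClosed {p : E × F | inner 𝕜 p.2 y.1 - inner 𝕜 p.1 y.2 = 0} :=
    isClosed_eq (by fun_prop) continuous_const
  simp only [adjoint_graph_eq_graph_adjoint hTc, adjoint_graph_eq_graph_adjoint hT,
    Submodule.mem_adjoint_iff, ← hc.graph_closure_eq_closure_graph]
  refine ⟨fun h a b hab => h a b (T.graph.le_topologicalClosure hab), fun h a b hab => ?_⟩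
  rw [← SetLike.mem_coe, Submodule.topologicalClosure_coe] at hab
  exact (hclosed.closure_subset_iff.2 fun p hp => h p.1 p.2 hp) hab

end Adjoint

end LinearPMap

namespace Conjugation

variable {H E : Type*} [NormedAddCommGroup H] [InnerProductSpace ℂ H]
  [NormedAddCommGroup E] [InnerProductSpace ℂ E] (C : Conjugation E)

theorem map_zero : C.toFun 0 = 0 := by
  simpa using C.map_smul' 0 0

theorem injective : Function.Injective C.toFun :=
  Function.LeftInverse.injective C.invol

theorem norm_map (x : E) : ‖C.toFun x‖ = ‖x‖ := by
  rw [norm_eq_sqrt_re_inner (𝕜 := ℂ), norm_eq_sqrt_re_inner (𝕜 := ℂ), C.inner_map]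

theorem continuous : Continuous C.toFun :=
  (AddMonoidHomClass.isometry_of_norm (AddMonoidHom.mk' C.toFun C.map_add') C.norm_map).continuous

def ofIntertwining (ι : H →ₗᵢ[ℂ] E) (c : H → H) (hc : ∀ x, C.toFun (ι x) = ι (c x)) :
    Conjugation H where
  toFun := c
  map_add' x y := ι.injective <| by rw [map_add, ← hc, ← hc, ← hc, map_add, C.map_add']
  map_smul' a x := ι.injective <| by rw [map_smul, ← hc, ← hc, map_smul, C.map_smul']
  invol x := ι.injective <| by rw [← hc, ← hc, C.invol]
  inner_map x y := by rw [← ι.inner_map_map, ← hc, ← hc, C.inner_map, ι.inner_map_map]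

end Conjugation

section CSelfAdjoint

variable {H E : Type*} [NormedAddCommGroup H] [InnerProductSpace ℂ H] [CompleteSpace H]
  [NormedAddCommGroup E] [InnerProductSpace ℂ E] [CompleteSpace E]
  {C : Conjugation E} {T : E →ₗ.[ℂ] E}

theorem cSelfAdjoint_iff_mem_graph :
    CSelfAdjoint C T ↔ ∀ x y, (x, y) ∈ T.graph ↔ (C.toFun x, C.toFun y) ∈ T.adjoint.graph := by
  constructor
  · rintro ⟨hsym, hmax⟩
    have hmp : ∀ x y, (x, y) ∈ T.graph → (C.toFun x, C.toFun y) ∈ T.adjoint.graph := by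
      intro x y hxy
      have hx := LinearPMap.mem_domain_of_mem_graph hxy
      obtain ⟨hCx, hT⟩ := hsym ⟨x, hx⟩
      refine (LinearPMap.image_iff hCx).1 ?_
      rw [(LinearPMap.image_iff hx).2 hxy, ← hT, C.invol]
    refine fun x y => ⟨hmp x y, fun h => ?_⟩
    have hx := hmax x (LinearPMap.mem_domain_of_mem_graph h)
    have hTx := hmp _ _ (T.mem_graph ⟨x, hx⟩)
    rw [C.injective (T.adjoint.mem_graph_snd_inj h hTx rfl)]
    exact T.mem_graph ⟨x, hx⟩
  · intro h
    refine ⟨fun x => ?_, fun y hy => ?_⟩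
    · have hx := (h _ _).1 (T.mem_graph x)
      refine ⟨LinearPMap.mem_domain_of_mem_graph hx, ?_⟩
      rw [← (LinearPMap.image_iff _).2 hx, C.invol]
    · obtain ⟨z, hz⟩ := LinearPMap.mem_domain_iff.1 hy
      exact LinearPMap.mem_domain_of_mem_graph ((h y (C.toFun z)).2 (by rwa [C.invol]))

theorem CSelfAdjoint.conj_mem_pker_adjoint_iff (h : CSelfAdjoint C T) {x : E} :
    C.toFun x ∈ pker T.adjoint ↔ x ∈ pker T := by
  rw [mem_pker_iff_mem_graph, mem_pker_iff_mem_graph, cSelfAdjoint_iff_mem_graph.1 h, C.map_zero]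

theorem CSelfAdjoint.dense_domain (h : CSelfAdjoint C T) : Dense (T.domain : Set E) := by
  by_contra hnd
  have hT : ∀ x : T.domain, T x = 0 := fun x => by
    obtain ⟨_, hCx⟩ := h.1 x
    rw [← hCx, LinearPMap.adjoint_apply_of_not_dense hnd, C.map_zero]
  have hall : ∀ y : E, y ∈ T.domain := fun y =>
    h.2 y (LinearPMap.mem_adjoint_domain_of_exists _ ⟨0, fun x => by simp [hT x]⟩)
  exact hnd (by simp [Set.eq_univ_of_forall hall])

theorem CSelfAdjoint.dense_domain_of_closure (h : CSelfAdjoint C T.closure) :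
    Dense (T.domain : Set E) :=
  dense_closure.1 (h.dense_domain.mono T.closure_domain_subset)

theorem CSelfAdjoint.of_intertwining (h : CSelfAdjoint C T) {A : H →ₗ.[ℂ] H} (ι : H →ₗᵢ[ℂ] E)
    (c : H → H) (hc : ∀ x, C.toFun (ι x) = ι (c x))
    (hA : ∀ a b, (ι a, ι b) ∈ T.graph ↔ (a, b) ∈ A.graph)
    (hA' : ∀ a b, (ι a, ι b) ∈ T.adjoint.graph ↔ (a, b) ∈ A.adjoint.graph) :
    CSelfAdjoint (C.ofIntertwining ι c hc) A := by
  rw [cSelfAdjoint_iff_mem_graph] at h ⊢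
  intro a b
  rw [← hA, h, hc, hc, hA']
  rfl

end CSelfAdjoint

section DirectSum

variable {𝕜 H K : Type*} [RCLike 𝕜] [NormedAddCommGroup H] [InnerProductSpace 𝕜 H]
  [NormedAddCommGroup K] [InnerProductSpace 𝕜 K]

variable (𝕜 H K) in
def inlₗᵢ : H →ₗᵢ[𝕜] WithLp 2 (H × K) where
  toFun x := toLp 2 (x, 0)
  map_add' x y := by simp [← WithLp.toLp_add]
  map_smul' c x := by simp [← WithLp.toLp_smul]
  norm_map' := WithLp.norm_toLp_fst 2 H K

variable (𝕜 H K) in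
def inrₗᵢ : K →ₗᵢ[𝕜] WithLp 2 (H × K) where
  toFun y := toLp 2 (0, y)
  map_add' x y := by simp [← WithLp.toLp_add]
  map_smul' c x := by simp [← WithLp.toLp_smul]
  norm_map' := WithLp.norm_toLp_snd 2 H K

@[simp]
theorem inlₗᵢ_apply (x : H) : inlₗᵢ 𝕜 H K x = toLp 2 (x, 0) := rfl

@[simp]
theorem inrₗᵢ_apply (y : K) : inrₗᵢ 𝕜 H K y = toLp 2 (0, y) := rfl

def IsDirectSum (T : WithLp 2 (H × K) →ₗ.[𝕜] WithLp 2 (H × K)) (A : H →ₗ.[𝕜] H)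
    (B : K →ₗ.[𝕜] K) : Prop :=
  ∀ f g : WithLp 2 (H × K), (f, g) ∈ T.graph ↔ (f.fst, g.fst) ∈ A.graph ∧ (f.snd, g.snd) ∈ B.graph

variable {T T' : WithLp 2 (H × K) →ₗ.[𝕜] WithLp 2 (H × K)} {A : H →ₗ.[𝕜] H} {B : K →ₗ.[𝕜] K}

theorem isDirectSum_of_domain_apply
    (hdom : ∀ f : WithLp 2 (H × K), f ∈ T.domain ↔
      (WithLp.equiv 2 (H × K) f).1 ∈ A.domain ∧ (WithLp.equiv 2 (H × K) f).2 ∈ B.domain)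
    (hact : ∀ (f : T.domain) (ha : (WithLp.equiv 2 (H × K) (f : WithLp 2 (H × K))).1 ∈ A.domain)
      (hb : (WithLp.equiv 2 (H × K) (f : WithLp 2 (H × K))).2 ∈ B.domain),
      WithLp.equiv 2 (H × K) (T f) = (A ⟨_, ha⟩, B ⟨_, hb⟩)) :
    IsDirectSum T A B := by
  intro f g
  constructor
  · intro hfg
    have hf := LinearPMap.mem_domain_of_mem_graph hfg
    obtain ⟨ha, hb⟩ := (hdom f).1 hf
    have hTf := hact ⟨f, hf⟩ ha hb
    rw [← (LinearPMap.image_iff hf).2 hfg] at hTf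
    exact ⟨(LinearPMap.image_iff ha).1 (congrArg Prod.fst hTf),
      (LinearPMap.image_iff hb).1 (congrArg Prod.snd hTf)⟩
  · rintro ⟨hA, hB⟩
    have ha := LinearPMap.mem_domain_of_mem_graph hA
    have hb := LinearPMap.mem_domain_of_mem_graph hB
    have hf := (hdom f).2 ⟨ha, hb⟩
    refine (LinearPMap.image_iff hf).1 ((WithLp.equiv 2 (H × K)).injective ?_)
    rw [hact ⟨f, hf⟩ ha hb]
    exact Prod.ext ((LinearPMap.image_iff ha).2 hA) ((LinearPMap.image_iff hb).2 hB)

namespace IsDirectSum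

theorem mem_graph_inl_iff (h : IsDirectSum T A B) (a b : H) :
    (inlₗᵢ 𝕜 H K a, inlₗᵢ 𝕜 H K b) ∈ T.graph ↔ (a, b) ∈ A.graph := by
  simpa using h (toLp 2 (a, 0)) (toLp 2 (b, 0))

theorem mem_graph_inr_iff (h : IsDirectSum T A B) (a b : K) :
    (inrₗᵢ 𝕜 H K a, inrₗᵢ 𝕜 H K b) ∈ T.graph ↔ (a, b) ∈ B.graph := by
  simpa using h (toLp 2 (0, a)) (toLp 2 (0, b))

theorem mem_pker_iff (h : IsDirectSum T A B) (f : WithLp 2 (H × K)) :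
    f ∈ pker T ↔ f.fst ∈ pker A ∧ f.snd ∈ pker B := by
  simp only [mem_pker_iff_mem_graph, h f 0, WithLp.zero_fst, WithLp.zero_snd]

theorem mem_domain_iff (h : IsDirectSum T A B) (f : WithLp 2 (H × K)) :
    f ∈ T.domain ↔ f.fst ∈ A.domain ∧ f.snd ∈ B.domain := by
  simp only [LinearPMap.mem_domain_iff, h f]
  exact ⟨fun ⟨_, hA, hB⟩ => ⟨⟨_, hA⟩, ⟨_, hB⟩⟩,
    fun ⟨⟨u, hu⟩, ⟨v, hv⟩⟩ => ⟨toLp 2 (u, v), hu, hv⟩⟩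

theorem dense_domain_iff (h : IsDirectSum T A B) :
    Dense (T.domain : Set (WithLp 2 (H × K))) ↔
      Dense (A.domain : Set H) ∧ Dense (B.domain : Set K) := by
  have hdom : (T.domain : Set (WithLp 2 (H × K))) =
      WithLp.homeomorphProd 2 H K ⁻¹' ((A.domain : Set H) ×ˢ (B.domain : Set K)) :=
    Set.ext h.mem_domain_iff
  rw [hdom, (WithLp.homeomorphProd 2 H K).isOpenQuotientMap.dense_preimage_iff,
    dense_iff_closure_eq, closure_prod_eq, Set.prod_eq_univ, dense_iff_closure_eq,
    dense_iff_closure_eq]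

theorem closure (h : IsDirectSum T A B) (hT : T.IsClosable) (hA : A.IsClosable)
    (hB : B.IsClosable) : IsDirectSum T.closure A.closure B.closure := by
  let Φ := ((WithLp.homeomorphProd 2 H K).prodCongr (WithLp.homeomorphProd 2 H K)).trans
    (Homeomorph.prodProdProdComm H K H K)
  have graph_eq : ∀ {T : WithLp 2 (H × K) →ₗ.[𝕜] WithLp 2 (H × K)} {A : H →ₗ.[𝕜] H}
      {B : K →ₗ.[𝕜] K}, IsDirectSum T A B ↔
        (T.graph : Set _) = Φ ⁻¹' ((A.graph : Set (H × H)) ×ˢ (B.graph : Set (K × K))) :=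
    fun {T A B} => ⟨fun h => Set.ext fun p => h p.1 p.2,
      fun h f g => Set.ext_iff.1 h (f, g)⟩
  rw [graph_eq] at h ⊢
  simp only [← hT.graph_closure_eq_closure_graph, ← hA.graph_closure_eq_closure_graph,
    ← hB.graph_closure_eq_closure_graph, Submodule.topologicalClosure_coe, h,
    ← Φ.preimage_closure, closure_prod_eq]

theorem adjoint [CompleteSpace H] [CompleteSpace K] (h : IsDirectSum T A B)
    (hA : Dense (A.domain : Set H)) (hB : Dense (B.domain : Set K)) :
    IsDirectSum T.adjoint A.adjoint B.adjoint := by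
  intro y z
  simp only [LinearPMap.adjoint_graph_eq_graph_adjoint (h.dense_domain_iff.2 ⟨hA, hB⟩),
    LinearPMap.adjoint_graph_eq_graph_adjoint hA, LinearPMap.adjoint_graph_eq_graph_adjoint hB,
    Submodule.mem_adjoint_iff]
  constructor
  · intro hT
    refine ⟨fun a b hab => ?_, fun a b hab => ?_⟩
    · simpa [WithLp.prod_inner_apply] using hT _ _ ((h.mem_graph_inl_iff a b).2 hab)
    · simpa [WithLp.prod_inner_apply] using hT _ _ ((h.mem_graph_inr_iff a b).2 hab)
  · rintro ⟨hA', hB'⟩ a b hab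
    rw [h] at hab
    have h1 := hA' _ _ hab.1
    have h2 := hB' _ _ hab.2
    simp only [WithLp.prod_inner_apply, WithLp.ofLp_fst, WithLp.ofLp_snd]
    linear_combination h1 + h2

theorem unique (h : IsDirectSum T A B) (h' : IsDirectSum T' A B) : T = T' :=
  LinearPMap.eq_of_eq_graph <| Submodule.ext fun p => (h p.1 p.2).trans (h' p.1 p.2).symm

end IsDirectSum

end DirectSum

section Reduction

variable {H K : Type*} [NormedAddCommGroup H] [InnerProductSpace ℂ H]
  [NormedAddCommGroup K] [InnerProductSpace ℂ K]

namespace Conjugation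

variable (C : Conjugation (WithLp 2 (H × K)))

theorem snd_conj_inl_eq_zero_of_dense {F : Set H} (hF : Dense F)
    (h : ∀ x ∈ F, (C.toFun (toLp 2 (x, 0))).snd = 0) (x : H) :
    (C.toFun (toLp 2 (x, 0))).snd = 0 :=
  congrFun (Continuous.ext_on hF
    ((WithLp.continuous_snd 2 H K).comp (C.continuous.comp (inlₗᵢ ℂ H K).continuous))
    continuous_const h) x

theorem fst_conj_inr_eq_zero (hC : ∀ x : H, (C.toFun (toLp 2 (x, 0))).snd = 0) (y : K) :
    (C.toFun (toLp 2 (0, y))).fst = 0 := by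
  set w := (C.toFun (toLp 2 (0, y))).fst
  have hCw : C.toFun (toLp 2 (w, 0)) = toLp 2 ((C.toFun (toLp 2 (w, 0))).fst, 0) :=
    WithLp.ofLp_injective 2 (Prod.ext rfl (hC w))
  have hww : (inner ℂ (C.toFun (toLp 2 (0, y))) (toLp 2 (w, 0)) : ℂ) = inner ℂ w w := by
    simp [WithLp.prod_inner_apply, w]
  rw [← C.invol (toLp 2 (w, 0)), C.inner_map, hCw] at hww
  simp only [WithLp.prod_inner_apply, inner_zero_left, inner_zero_right, add_zero] at hww
  exact inner_self_eq_zero.1 hww.symm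

end Conjugation

variable [CompleteSpace H] [CompleteSpace K] {C : Conjugation (WithLp 2 (H × K))}

namespace IsDirectSum

variable {T : WithLp 2 (H × K) →ₗ.[ℂ] WithLp 2 (H × K)} {A : H →ₗ.[ℂ] H} {B : K →ₗ.[ℂ] K}

theorem exists_cSelfAdjoint_fst (h : IsDirectSum T A B) (hT : CSelfAdjoint C T)
    (hA : Dense (A.domain : Set H)) (hB : Dense (B.domain : Set K))
    (hC : ∀ x : H, (C.toFun (toLp 2 (x, 0))).snd = 0) : ∃ CH : Conjugation H, CSelfAdjoint CH A :=
  ⟨_, hT.of_intertwining (inlₗᵢ ℂ H K) (fun x => (C.toFun (toLp 2 (x, 0))).fst)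
    (fun x => WithLp.ofLp_injective 2 (Prod.ext rfl (hC x))) h.mem_graph_inl_iff
    (h.adjoint hA hB).mem_graph_inl_iff⟩

theorem exists_cSelfAdjoint_snd (h : IsDirectSum T A B) (hT : CSelfAdjoint C T)
    (hA : Dense (A.domain : Set H)) (hB : Dense (B.domain : Set K))
    (hC : ∀ y : K, (C.toFun (toLp 2 (0, y))).fst = 0) : ∃ CK : Conjugation K, CSelfAdjoint CK B :=
  ⟨_, hT.of_intertwining (inrₗᵢ ℂ H K) (fun y => (C.toFun (toLp 2 (0, y))).snd)
    (fun y => WithLp.ofLp_injective 2 (Prod.ext (hC y) rfl)) h.mem_graph_inr_iff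
    (h.adjoint hA hB).mem_graph_inr_iff⟩

end IsDirectSum

theorem snd_conj_inl_mem_pker {Sm Sn : WithLp 2 (H × K) →ₗ.[ℂ] WithLp 2 (H × K)}
    {Am An : H →ₗ.[ℂ] H} {Bm Bn : K →ₗ.[ℂ] K}
    (hSm : IsDirectSum Sm Am Bm) (hSn : IsDirectSum Sn An Bn)
    (hm : Am.IsClosable ∧ Bm.IsClosable ∧ Sm.IsClosable)
    (hn : An.IsClosable ∧ Bn.IsClosable ∧ Sn.IsClosable)
    (hCm : CSelfAdjoint C Sm.closure) (hCn : CSelfAdjoint C Sn.closure)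
    {x : H} (hx₁ : x ∈ pker Am.closure) (hx₂ : x ∈ pker An.adjoint) :
    (C.toFun (toLp 2 (x, 0))).snd ∈ pker Bm.adjoint ∩ pker Bn.closure := by
  have hdm := hCm.dense_domain_of_closure
  have hdn := hCn.dense_domain_of_closure
  obtain ⟨hAm, hBm⟩ := hSm.dense_domain_iff.1 hdm
  obtain ⟨hAn, hBn⟩ := hSn.dense_domain_iff.1 hdn
  have h₁ : toLp 2 (x, 0) ∈ pker Sm.closure :=
    ((hSm.closure hm.2.2 hm.1 hm.2.1).mem_pker_iff _).2 ⟨hx₁, zero_mem_pker _⟩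
  have h₂ : C.toFun (C.toFun (toLp 2 (x, 0))) ∈ pker Sn.closure.adjoint := by
    rw [C.invol, LinearPMap.adjoint_closure hdn]
    exact ((hSn.adjoint hAn hBn).mem_pker_iff _).2 ⟨hx₂, zero_mem_pker _⟩
  have h₃ : C.toFun (toLp 2 (x, 0)) ∈ pker Sm.adjoint := by
    rw [← LinearPMap.adjoint_closure hdm]
    exact hCm.conj_mem_pker_adjoint_iff.2 h₁
  exact ⟨(((hSm.adjoint hAm hBm).mem_pker_iff _).1 h₃).2,
    (((hSn.closure hn.2.2 hn.1 hn.2.1).mem_pker_iff _).1 (hCn.conj_mem_pker_adjoint_iff.1 h₂)).2⟩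

end Reduction

/-- Let `T = A ⊕ B` be a closed densely defined operator in `H ⊕ K` such
that for `1 ≤ m ≤ k` the powers `A^m`, `B^m` are closable and the closure of
`A^m ⊕ B^m` (here the operator `S m`) is `C`-selfadjoint. If `F` is a linearly dense
subspace of `H` with `F ⊆ ⋃_{1≤m≤k} (ker Ā^m ∩ ker (A^{k+1-m})*)`, and
`⋃_{1≤m≤k} (ker (B^m)* ∩ ker B̄^{k+1-m}) = {0}`, then `H` and `K` reduce `C` and
`A`, `B` are complex selfadjoint. -/
theorem stmt_18 {H K : Type*} [NormedAddCommGroup H] [InnerProductSpace ℂ H] [CompleteSpace H]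
    [NormedAddCommGroup K] [InnerProductSpace ℂ K] [CompleteSpace K]
    (k : ℕ) (hk : 1 ≤ k)
    (A : H →ₗ.[ℂ] H) (B : K →ₗ.[ℂ] K)
    (hdA : Dense (A.domain : Set H)) (hdB : Dense (B.domain : Set K))
    (C : Conjugation (WithLp 2 (H × K)))
    -- `T` is the direct sum `A ⊕ B`
    (T : WithLp 2 (H × K) →ₗ.[ℂ] WithLp 2 (H × K))
    (hTdom : ∀ f : WithLp 2 (H × K), f ∈ T.domain ↔
      (WithLp.equiv 2 (H × K) f).1 ∈ A.domain ∧ (WithLp.equiv 2 (H × K) f).2 ∈ B.domain)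
    (hTact : ∀ (f : T.domain) (ha : (WithLp.equiv 2 (H × K) (f : WithLp 2 (H × K))).1 ∈ A.domain)
      (hb : (WithLp.equiv 2 (H × K) (f : WithLp 2 (H × K))).2 ∈ B.domain),
      WithLp.equiv 2 (H × K) (T f) = (A ⟨_, ha⟩, B ⟨_, hb⟩))
    (hTclosed : T.IsClosed)
    -- `S m` is the direct sum `A^m ⊕ B^m`
    (S : ℕ → (WithLp 2 (H × K) →ₗ.[ℂ] WithLp 2 (H × K)))
    (hSdom : ∀ m, ∀ f : WithLp 2 (H × K), f ∈ (S m).domain ↔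
      (WithLp.equiv 2 (H × K) f).1 ∈ (A.ppow m).domain ∧
      (WithLp.equiv 2 (H × K) f).2 ∈ (B.ppow m).domain)
    (hSact : ∀ m, ∀ (f : (S m).domain)
      (ha : (WithLp.equiv 2 (H × K) (f : WithLp 2 (H × K))).1 ∈ (A.ppow m).domain)
      (hb : (WithLp.equiv 2 (H × K) (f : WithLp 2 (H × K))).2 ∈ (B.ppow m).domain),
      WithLp.equiv 2 (H × K) ((S m) f) = ((A.ppow m) ⟨_, ha⟩, (B.ppow m) ⟨_, hb⟩))
    -- closability of the powers and `C`-selfadjointness of the closures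
    (hclosable : ∀ m, 1 ≤ m → m ≤ k →
      (A.ppow m).IsClosable ∧ (B.ppow m).IsClosable ∧ (S m).IsClosable)
    (hsa : ∀ m, 1 ≤ m → m ≤ k → CSelfAdjoint C ((S m).closure))
    -- `F` is a linearly dense subspace of `H` contained in the union of the kernels
    (F : Submodule ℂ H) (hFdense : Dense (F : Set H))
    (hF : ∀ x ∈ F, ∃ m, 1 ≤ m ∧ m ≤ k ∧
      x ∈ pker (A.ppow m).closure ∩ pker ((A.ppow (k + 1 - m)).adjoint))
    -- the corresponding union of kernels for `B` is trivial
    (hB : ∀ y : K, (∃ m, 1 ≤ m ∧ m ≤ k ∧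
      y ∈ pker ((B.ppow m).adjoint) ∩ pker (B.ppow (k + 1 - m)).closure) → y = 0) :
    -- `H` and `K` reduce `C`, and `A`, `B` are complex selfadjoint
    (∀ x : H, (WithLp.equiv 2 (H × K)
      (C.toFun ((WithLp.equiv 2 (H × K)).symm (x, 0)))).2 = 0) ∧
    (∀ y : K, (WithLp.equiv 2 (H × K)
      (C.toFun ((WithLp.equiv 2 (H × K)).symm (0, y)))).1 = 0) ∧
    (∃ CH : Conjugation H, CSelfAdjoint CH A) ∧
    (∃ CK : Conjugation K, CSelfAdjoint CK B) := by
  have hT := isDirectSum_of_domain_apply hTdom hTact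
  have hS : ∀ m, IsDirectSum (S m) (A.ppow m) (B.ppow m) := fun m =>
    isDirectSum_of_domain_apply (hSdom m) (hSact m)
  have hCF : ∀ x ∈ F, (C.toFun (toLp 2 (x, 0))).snd = 0 := by
    intro x hx
    obtain ⟨m, hm₁, hm₂, hx₁, hx₂⟩ := hF x hx
    refine hB _ ⟨m, hm₁, hm₂, snd_conj_inl_mem_pker (hS m) (hS (k + 1 - m))
      (hclosable m hm₁ hm₂) (hclosable _ ?_ ?_) (hsa m hm₁ hm₂) (hsa _ ?_ ?_) hx₁ hx₂⟩ <;> omega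
  have hCH := C.snd_conj_inl_eq_zero_of_dense hFdense hCF
  have hCK := C.fst_conj_inr_eq_zero hCH
  have hTC : CSelfAdjoint C T := by
    have hS₁ := hS 1
    rw [A.ppow_one, B.ppow_one] at hS₁
    simpa only [hS₁.unique hT, hTclosed.closure_eq] using hsa 1 le_rfl hk
  exact ⟨hCH, hCK, hT.exists_cSelfAdjoint_fst hTC hdA hdB hCH,
    hT.exists_cSelfAdjoint_snd hTC hdA hdB hCK⟩
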